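/- arXiv:1704.02054 — 7 statements merged into one kernel-verified Lean document; each statement's English description precedes it below -/
import Mathlib

section
/- For integers n ≥ m ≥ k ≥ 0 with m ≥ 1, C(n,k)/C(m,k) ≥ (n/m)^k * exp((n-m)/(n*m) * k*(k-1)/2). -/
/-!
Both sides factor over `i < k`: the ratio of binomial coefficients is `∏ (n - i) / (m - i)`, and
since `∑_{i<k} i = k (k - 1) / 2` the left side is `∏ (n / m) exp ((n - m) i / (n m))`. Factorwise,
`exp t ≤ 1 / (1 - t)` with `t = (n - m) i / (n m)` reduces the claim to `(n - m) i² ≥ 0`.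
-/

open Finset Real

/-- For `m < k` both sides are `0`: the factor `i = m` divides by zero. -/
theorem Nat.cast_choose_div_cast_choose (K : Type*) [Field K] [CharZero K] (n m k : ℕ) :
    (n.choose k : K) / m.choose k = ∏ i ∈ range k, ((n : K) - i) / ((m : K) - i) := by
  rw [Nat.cast_choose_eq_descPochhammer_div, Nat.cast_choose_eq_descPochhammer_div,
    div_div_div_cancel_right₀ (by exact_mod_cast k.factorial_ne_zero),
    descPochhammer_eval_eq_prod_range, descPochhammer_eval_eq_prod_range, prod_div_distrib]

theorem Finset.sum_range_natCast_id (K : Type*) [Field K] [CharZero K] (k : ℕ) :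
    ∑ i ∈ range k, (i : K) = k * (k - 1) / 2 := by
  induction k with
  | zero => simp
  | succ k ih =>
    rw [sum_range_succ, ih]
    push_cast
    ring

theorem Real.exp_le_one_div_one_sub {t : ℝ} (ht : t < 1) : exp t ≤ 1 / (1 - t) := by
  rw [le_div_iff₀ (sub_pos.2 ht)]
  calc exp t * (1 - t) ≤ exp t * exp (-t) := by gcongr; exact one_sub_le_exp_neg t
    _ = 1 := by rw [← exp_add, add_neg_cancel, exp_zero]

theorem div_mul_exp_le_sub_div_sub {a b x : ℝ} (hb : 0 < b) (hba : b ≤ a) (hxb : x < b) :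
    a / b * exp ((a - b) / (a * b) * x) ≤ (a - x) / (b - x) := by
  have ha : 0 < a := hb.trans_le hba
  have hgap : (a - b) * x < a * b := by
    rcases le_or_gt 0 x with hx | hx <;> nlinarith
  have hden : 0 < a * b - (a - b) * x := by linarith
  have hone_sub : 1 - (a - b) / (a * b) * x = (a * b - (a - b) * x) / (a * b) := by
    field_simp
  calc a / b * exp ((a - b) / (a * b) * x)
      ≤ a / b * (1 / (1 - (a - b) / (a * b) * x)) := by
        gcongr
        apply exp_le_one_div_one_sub
        rw [div_mul_eq_mul_div, div_lt_one (by positivity)]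
        exact hgap
    _ = a ^ 2 / (a * b - (a - b) * x) := by
        rw [hone_sub]
        field_simp
    _ ≤ (a - x) / (b - x) := by
        rw [div_le_div_iff₀ hden (by linarith)]
        -- the difference of the cross products is `(a - b) x²`
        nlinarith [mul_nonneg (sub_nonneg.2 hba) (sq_nonneg x)]

theorem binom_ratio_lower_exp_general (n m k : ℕ) (hmn : m ≤ n) (hkm : k ≤ m) :
    ((n : ℝ) / m) ^ k *
      Real.exp (((n : ℝ) - m) / ((n : ℝ) * m) * ((k : ℝ) * ((k : ℝ) - 1) / 2))
    ≤ (n.choose k : ℝ) / (m.choose k : ℝ) := by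
  have hmn' : (m : ℝ) ≤ n := by exact_mod_cast hmn
  calc ((n : ℝ) / m) ^ k *
        exp (((n : ℝ) - m) / ((n : ℝ) * m) * ((k : ℝ) * ((k : ℝ) - 1) / 2))
      = ∏ i ∈ range k, ((n : ℝ) / m * exp (((n : ℝ) - m) / ((n : ℝ) * m) * i)) := by
        rw [prod_mul_distrib, prod_const, card_range, ← exp_sum, ← mul_sum,
          sum_range_natCast_id]
    _ ≤ ∏ i ∈ range k, ((n : ℝ) - i) / ((m : ℝ) - i) := by
        refine prod_le_prod (fun _ _ ↦ by positivity) fun i hi ↦ ?_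
        have him : (i : ℝ) < m := by exact_mod_cast (mem_range.1 hi).trans_le hkm
        exact div_mul_exp_le_sub_div_sub ((i.cast_nonneg).trans_lt him) hmn' him
    _ = (n.choose k : ℝ) / m.choose k := (Nat.cast_choose_div_cast_choose ℝ n m k).symm

theorem binom_ratio_lower_exp (n m k : ℕ) (hmn : m ≤ n) (hkm : k ≤ m) (hm : 1 ≤ m) :
    ((n : ℝ) / m) ^ k *
      Real.exp (((n : ℝ) - m) / ((n : ℝ) * m) * ((k : ℝ) * ((k : ℝ) - 1) / 2))
    ≤ (n.choose k : ℝ) / (m.choose k : ℝ) :=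
  binom_ratio_lower_exp_general n m k hmn hkm
end

section
/- For integers n ≥ m ≥ k ≥ 0 with k ≤ m, C(n,k)/C(m,k) ≤ exp(n·H(k/n)) / exp(m·H(k/m)), where H is the binary entropy function. -/
/-!
Writing `E N = N * binEntropy (k / N) = N log N - k log k - (N - k) log (N - k)`, the claim says
that `C(N, k) / exp (E N)` is antitone in `N ≥ k`. Since
`C(N+1, k) / C(N, k) = (N + 1) / (N + 1 - k)`, one step of this amounts to
`log (N + 1) - log (N + 1 - k) ≤ E (N + 1) - E N`, which rearranges to `g (N - k) ≤ g N` for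
`g x = x log (1 + 1/x)`. That `g` is monotone is the concavity of `log`: `g x` is the slope of
`log` between `1` and `1 + 1/x`.
-/

open Real Set

lemma Real.mul_binEntropy_div (k N : ℝ) :
    N * binEntropy (k / N) = N * log N - k * log k - (N - k) * log (N - k) := by
  rcases eq_or_ne N 0 with rfl | hN
  · simp [log_neg_eq_log]
  have hsub : 1 - k / N = (N - k) / N := by field_simp
  rw [binEntropy_eq_negMulLog_add_negMulLog_one_sub, hsub, div_eq_mul_inv, div_eq_mul_inv,
    negMulLog_mul, negMulLog_mul, negMulLog, negMulLog, negMulLog, log_inv]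
  field_simp
  ring

lemma Real.monotoneOn_mul_log_one_add_inv :
    MonotoneOn (fun x : ℝ => x * log (1 + x⁻¹)) (Ici 0) := by
  intro a ha b hb hab
  rcases (mem_Ici.1 ha).eq_or_lt with rfl | ha
  · have : 0 ≤ b⁻¹ := inv_nonneg.2 hb
    simpa using mul_nonneg (mem_Ici.1 hb) (log_nonneg (by linarith))
  have hslope (x : ℝ) (hx : 0 < x) : slope log 1 (1 + x⁻¹) = x * log (1 + x⁻¹) := by
    rw [slope_def_field, log_one, sub_zero, add_sub_cancel_left, div_inv_eq_mul, mul_comm]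
  have hmem (x : ℝ) (hx : 0 < x) : 1 + x⁻¹ ∈ {y ∈ Ioi (0 : ℝ) | 1 < y} :=
    ⟨mem_Ioi.2 (by positivity), lt_add_of_pos_right 1 (inv_pos.2 hx)⟩
  have := strictConcaveOn_log_Ioi.concaveOn.antitoneOn_slope_gt (mem_Ioi.2 one_pos)
    (hmem b (ha.trans_le hab)) (hmem a ha) (by gcongr)
  simpa only [hslope a ha, hslope b (ha.trans_le hab)] using this

lemma Real.log_add_one_sub_log_le_mul_binEntropy_sub {k N : ℝ} (hk : 0 ≤ k) (hkN : k ≤ N) :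
    log (N + 1) - log (N + 1 - k) ≤
      (N + 1) * binEntropy (k / (N + 1)) - N * binEntropy (k / N) := by
  have hmono := monotoneOn_mul_log_one_add_inv (mem_Ici.2 (sub_nonneg.2 hkN))
    (mem_Ici.2 (hk.trans hkN)) (sub_le_self N hk)
  have hlog (x : ℝ) (hx : 0 ≤ x) : x * log (1 + x⁻¹) = x * log (x + 1) - x * log x := by
    rcases hx.eq_or_lt with rfl | hx
    · simp
    rw [show 1 + x⁻¹ = (x + 1) / x by field_simp, log_div (by positivity) hx.ne']
    ring
  simp only [hlog _ (sub_nonneg.2 hkN), hlog _ (hk.trans hkN),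
    show N - k + 1 = N + 1 - k by ring] at hmono
  rw [mul_binEntropy_div, mul_binEntropy_div]
  linear_combination hmono

lemma antitoneOn_choose_div_exp_mul_binEntropy (k : ℕ) :
    AntitoneOn (fun N : ℕ => (N.choose k : ℝ) / exp (N * binEntropy (k / N))) (Ici k) := by
  refine antitoneOn_nat_Ici_of_succ_le fun N (hkN : k ≤ N) => ?_
  have hkN' : (k : ℝ) ≤ N := by exact_mod_cast hkN
  have hpos : (0 : ℝ) < N + 1 - k := by linarith
  have hchoose : ((N + 1).choose k : ℝ) = N.choose k * ((N + 1) / (N + 1 - k)) := by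
    have := congrArg (Nat.cast : ℕ → ℝ) (Nat.choose_mul_succ_eq N k)
    push_cast [Nat.cast_sub (by omega : k ≤ N + 1)] at this
    field_simp
    linarith
  have hratio : (N + 1) / (N + 1 - k) ≤
      exp ((N + 1) * binEntropy (k / (N + 1)) - N * binEntropy (k / N)) := by
    rw [← log_le_iff_le_exp (by positivity), log_div (by positivity) hpos.ne']
    exact log_add_one_sub_log_le_mul_binEntropy_sub (Nat.cast_nonneg k) hkN'
  rw [exp_sub] at hratio
  push_cast
  rw [hchoose]
  calc _ ≤ N.choose k *
          (exp ((N + 1) * binEntropy (k / (N + 1))) / exp (N * binEntropy (k / N))) /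
          exp ((N + 1) * binEntropy (k / (N + 1))) := by gcongr
    _ = N.choose k / exp (N * binEntropy (k / N)) := by field_simp

theorem binom_ratio_entropy_upper_general (n m k : ℕ) (hkm : k < m) (hmn : m < n) :
    (n.choose k : ℝ) / (m.choose k : ℝ)
      ≤ Real.exp ((n : ℝ) * Real.binEntropy ((k : ℝ) / n)) /
        Real.exp ((m : ℝ) * Real.binEntropy ((k : ℝ) / m)) := by
  have hCm : (0 : ℝ) < m.choose k := by exact_mod_cast Nat.choose_pos hkm.le
  have := antitoneOn_choose_div_exp_mul_binEntropy k (mem_Ici.2 hkm.le)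
    (mem_Ici.2 (hkm.trans hmn).le) hmn.le
  rw [div_le_div_iff₀ (exp_pos _) (exp_pos _)] at this
  rw [div_le_div_iff₀ hCm (exp_pos _)]
  linarith

theorem binom_ratio_entropy_upper (n m k : ℕ) (hk : 0 < k) (hkm : k < m) (hmn : m < n) :
    (n.choose k : ℝ) / (m.choose k : ℝ)
      ≤ Real.exp ((n : ℝ) * Real.binEntropy ((k : ℝ) / n)) /
        Real.exp ((m : ℝ) * Real.binEntropy ((k : ℝ) / m)) :=
  binom_ratio_entropy_upper_general n m k hkm hmn
end

section
/- For integers n ≥ m ≥ k ≥ 0 with m ≥ 1, C(n,k)/C(m,k) ≤ (n/m)^k * exp(k²/m). -/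
/-!
Writing `C(n,k) / C(m,k)` as a ratio of falling factorials and bounding `n^(k falling)` by `n^k`,
it remains to show `m^k ≤ exp(k²/m) · m^(k falling)`. Since `(a + 1)^a ≤ e · a^a`, the quotients
`a^a / (a-1)^(a-1)` are at most `e · a`, and telescoping them from `a = m` down to `a = m - k + 1`
gives `m^m ≤ e^k · m^(k falling) · (m-k)^(m-k)`. Finally `(m-k)^(m-k) ≤ (m · e^(-k/m))^(m-k)`
by `1 - x ≤ e^(-x)`, and `e^k · e^(-k(m-k)/m) = e^(k²/m)`.
-/

open Real

lemma Real.natCast_add_one_pow_le_exp_one_mul_pow (j : ℕ) :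
    ((j : ℝ) + 1) ^ j ≤ exp 1 * (j : ℝ) ^ j := by
  rcases j.eq_zero_or_pos with rfl | hj
  · simp
  have hj' : (j : ℝ) ≠ 0 := by positivity
  calc ((j : ℝ) + 1) ^ j = (1 + (j : ℝ)⁻¹) ^ j * (j : ℝ) ^ j := by
        rw [← mul_pow, add_mul, one_mul, inv_mul_cancel₀ hj', add_comm]
    _ ≤ exp 1 * (j : ℝ) ^ j := by gcongr; exact one_add_inv_pow_le_exp

lemma Nat.add_pow_self_le_exp_mul_descFactorial (j k : ℕ) :
    ((j + k : ℕ) : ℝ) ^ (j + k) ≤ exp k * ((j + k).descFactorial k : ℝ) * (j : ℝ) ^ j := by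
  induction k with
  | zero => simp
  | succ k ih =>
    have hstep := Real.natCast_add_one_pow_le_exp_one_mul_pow (j + k)
    rw [← add_assoc, Nat.succ_descFactorial_succ]
    push_cast at hstep ih ⊢
    calc ((j : ℝ) + k + 1) ^ (j + k + 1) = ((j : ℝ) + k + 1) * ((j : ℝ) + k + 1) ^ (j + k) := by
          ring
      _ ≤ ((j : ℝ) + k + 1) * (exp 1 * (exp k * (j + k).descFactorial k * (j : ℝ) ^ j)) := by
          gcongr; exact hstep.trans (by gcongr)
      _ = exp (k + 1) * (((j : ℝ) + k + 1) * (j + k).descFactorial k) * (j : ℝ) ^ j := by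
          rw [exp_add]; ring

lemma Nat.pow_le_exp_mul_descFactorial (m k : ℕ) (hkm : k ≤ m) :
    (m : ℝ) ^ k ≤ exp ((k : ℝ) ^ 2 / m) * (m.descFactorial k : ℝ) := by
  rcases k.eq_zero_or_pos with rfl | hk
  · simp
  obtain ⟨j, rfl⟩ := Nat.exists_eq_add_of_le' hkm
  have hm : (0 : ℝ) < j + k := by positivity
  have hj : (j : ℝ) ≤ (j + k) * exp (-(k / (j + k))) := by
    have := one_sub_le_exp_neg (k / (j + k))
    rw [one_sub_div hm.ne'] at this
    rwa [div_le_iff₀' hm, add_sub_cancel_right] at this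
  have hexp : exp k * exp (-(k / (j + k))) ^ j = exp ((k : ℝ) ^ 2 / (j + k)) := by
    rw [← exp_nat_mul, ← exp_add]
    congr 1
    field_simp
    ring
  have htele := Nat.add_pow_self_le_exp_mul_descFactorial j k
  push_cast at htele ⊢
  refine le_of_mul_le_mul_right ?_ (pow_pos hm j)
  calc ((j : ℝ) + k) ^ k * ((j : ℝ) + k) ^ j = ((j : ℝ) + k) ^ (j + k) := by ring
    _ ≤ exp k * (j + k).descFactorial k * (j : ℝ) ^ j := htele
    _ ≤ exp k * (j + k).descFactorial k * (((j : ℝ) + k) * exp (-(k / (j + k)))) ^ j := by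
        gcongr
    _ = exp ((k : ℝ) ^ 2 / (j + k)) * (j + k).descFactorial k * ((j : ℝ) + k) ^ j := by
        rw [← hexp, mul_pow]; ring

lemma Nat.choose_div_choose_eq_descFactorial_div (n m k : ℕ) :
    (n.choose k : ℝ) / m.choose k = (n.descFactorial k : ℝ) / m.descFactorial k := by
  simp only [Nat.descFactorial_eq_factorial_mul_choose, Nat.cast_mul]
  rw [mul_div_mul_left _ _ (by positivity)]

theorem binom_ratio_upper_general (n m k : ℕ) (hkm : k ≤ m) :
    (n.choose k : ℝ) / (m.choose k : ℝ)
      ≤ ((n : ℝ) / m) ^ k * Real.exp ((k : ℝ) ^ 2 / m) := by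
  have hdesc : 0 < m.descFactorial k := Nat.descFactorial_pos.mpr hkm
  have hpow : (0 : ℝ) < (m : ℝ) ^ k := by
    exact_mod_cast hdesc.trans_le (Nat.descFactorial_le_pow m k)
  rw [Nat.choose_div_choose_eq_descFactorial_div]
  calc (n.descFactorial k : ℝ) / m.descFactorial k ≤ (n : ℝ) ^ k / m.descFactorial k := by
        gcongr; exact_mod_cast Nat.descFactorial_le_pow n k
    _ ≤ (n : ℝ) ^ k / ((m : ℝ) ^ k / exp ((k : ℝ) ^ 2 / m)) := by
        gcongr
        rw [div_le_iff₀ (exp_pos _), mul_comm]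
        exact Nat.pow_le_exp_mul_descFactorial m k hkm
    _ = ((n : ℝ) / m) ^ k * exp ((k : ℝ) ^ 2 / m) := by
        rw [div_div_eq_mul_div, div_pow, mul_div_right_comm]

theorem binom_ratio_upper (n m k : ℕ) (hmn : m ≤ n) (hkm : k ≤ m) (hm : 1 ≤ m) :
    (n.choose k : ℝ) / (m.choose k : ℝ)
      ≤ ((n : ℝ) / m) ^ k * Real.exp ((k : ℝ) ^ 2 / m) :=
  binom_ratio_upper_general n m k hkm
end

section
/- For all x with 0 ≤ x ≤ 1, the binary entropy function satisfies H(x) ≤ log 2 - 2(1/2 - x)². -/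
/-!
Let `g y = H y + 2 (1/2 - y)²`. With `t = 1 - 2y`, its derivative `log (1 - y) - log y - (2 - 4y)`
is `log (1 + t) - log (1 - t) - 2t`, the tail of the odd series of `2 artanh t`, hence nonnegative on
`(0, 1/2)`. So `g` increases on `[0, 1/2]` up to `g (1/2) = log 2`, and `H (1 - y) = H y` covers
`[1/2, 1]`.
-/

open Real Set

lemma two_mul_le_log_one_add_sub_log_one_sub {t : ℝ} (ht₀ : 0 ≤ t) (ht₁ : t < 1) :
    2 * t ≤ log (1 + t) - log (1 - t) := by
  have hsum := hasSum_log_sub_log_of_abs_lt_one (abs_lt.mpr ⟨by linarith, ht₁⟩)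
  simpa using le_hasSum hsum 0 fun k _ => by positivity

lemma two_sub_four_mul_le_log_one_sub_sub_log {y : ℝ} (hy₀ : 0 < y) (hy₁ : y ≤ 2⁻¹) :
    2 - 4 * y ≤ log (1 - y) - log y := by
  have h := two_mul_le_log_one_add_sub_log_one_sub (t := 1 - 2 * y) (by linarith) (by linarith)
  rwa [show 1 + (1 - 2 * y) = 2 * (1 - y) by ring, show 1 - (1 - 2 * y) = 2 * y by ring,
    log_mul two_ne_zero (by linarith), log_mul two_ne_zero hy₀.ne', add_sub_add_left_eq_sub,
    show 2 * (1 - 2 * y) = 2 - 4 * y by ring] at h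

lemma monotoneOn_binEntropy_add_two_mul_sq :
    MonotoneOn (fun y => binEntropy y + 2 * (2⁻¹ - y) ^ 2) (Icc 0 2⁻¹) := by
  refine monotoneOn_of_hasDerivWithinAt_nonneg (f' := fun y => log (1 - y) - log y + (4 * y - 2))
    (convex_Icc _ _) (by fun_prop) (fun y hy => ?_) (fun y hy => ?_) <;>
    rw [interior_Icc] at hy
  · have hH := hasDerivAt_binEntropy hy.1.ne' (by linarith [hy.2])
    have hsq : HasDerivAt (fun y : ℝ => 2 * (2⁻¹ - y) ^ 2) (4 * y - 2) y :=
      ((((hasDerivAt_id' y).const_sub 2⁻¹).fun_pow 2).const_mul 2).congr_deriv (by norm_num; ring)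
    exact (hH.add hsq).hasDerivWithinAt
  · linarith [two_sub_four_mul_le_log_one_sub_sub_log hy.1 hy.2.le]

theorem binEntropy_le_log_two (x : ℝ) (h0 : 0 ≤ x) (h1 : x ≤ 1) :
    Real.binEntropy x ≤ Real.log 2 - 2 * (1 / 2 - x) ^ 2 := by
  wlog hx : x ≤ 2⁻¹ generalizing x
  · have h := this (1 - x) (by linarith) (by linarith) (by linarith)
    rw [binEntropy_one_sub] at h
    linarith [show (1 / 2 - (1 - x)) ^ 2 = (1 / 2 - x) ^ 2 by ring]
  have h := monotoneOn_binEntropy_add_two_mul_sq ⟨h0, hx⟩ ⟨by norm_num, le_rfl⟩ hx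
  simp only [binEntropy_two_inv, sub_self] at h
  rw [one_div]
  linarith
end

section
/- For all x with 0 ≤ x ≤ 1, the binary entropy function satisfies H(x) ≥ log 2 - 2(1/2 - x)² - 4(1/2 - x)⁴. -/
/-!
Writing `u = 1 - 2x`, one has `H(x) = log 2 - ((1 + u) log (1 + u) + (1 - u) log (1 - u)) / 2`,
so it suffices to bound the bracket by `u² + u⁴/2` on `[0, 1]` (the case `x > 1/2` follows by the
symmetry `H(1 - x) = H(x)`). Bounding `log (1 + u)` by its Padé approximant `u(6 + u)/(6 + 4u)` and
`-log (1 - u)` from below by its Taylor polynomial of degree 4 leaves the polynomial gap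
`u⁴(11 + u - 6u²) / (6(6 + 4u)) ≥ 0`.
-/

open Real Finset

namespace Real

theorem log_one_add_le_pade {u : ℝ} (hu : 0 ≤ u) :
    log (1 + u) ≤ u * (6 + u) / (6 + 4 * u) := by
  let F : ℝ → ℝ := fun t ↦ t * (6 + t) / (6 + 4 * t) - log (1 + t)
  have hF : ∀ t, 0 ≤ t → HasDerivAt F (t ^ 3 / ((3 + 2 * t) ^ 2 * (1 + t))) t := by
    intro t ht
    have h₁ : 6 + 4 * t ≠ 0 := by positivity
    have h₂ : 1 + t ≠ 0 := by positivity
    have := (((hasDerivAt_id' t).fun_mul ((hasDerivAt_id' t).const_add 6)).fun_div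
      (((hasDerivAt_id' t).const_mul 4).const_add 6) h₁).fun_sub
      (((hasDerivAt_id' t).const_add 1).log h₂)
    refine this.congr_deriv ?_
    field_simp
    ring
  have hmono : MonotoneOn F (Set.Ici 0) :=
    monotoneOn_of_hasDerivWithinAt_nonneg (convex_Ici 0)
      (fun t ht ↦ (hF t ht).continuousAt.continuousWithinAt)
      (fun t ht ↦ (hF t (interior_subset ht)).hasDerivWithinAt)
      (fun t ht ↦ by have : (0 : ℝ) ≤ t := interior_subset ht; positivity)
  have := hmono Set.self_mem_Ici (Set.mem_Ici.2 hu) hu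
  simp only [F] at this
  norm_num at this
  linarith

theorem sum_range_pow_div_le_neg_log_one_sub {u : ℝ} (hu₀ : 0 ≤ u) (hu₁ : u < 1) (n : ℕ) :
    ∑ i ∈ range n, u ^ (i + 1) / (i + 1) ≤ -log (1 - u) :=
  sum_le_hasSum _ (fun _ _ ↦ by positivity)
    (hasSum_pow_div_log_of_abs_lt_one (abs_lt.2 ⟨by linarith, hu₁⟩))

theorem one_add_mul_log_one_add_add_one_sub_mul_log_one_sub_le {u : ℝ} (hu₀ : 0 ≤ u)
    (hu₁ : u ≤ 1) : (1 + u) * log (1 + u) + (1 - u) * log (1 - u) ≤ u ^ 2 + u ^ 4 / 2 := by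
  rcases hu₁.eq_or_lt with rfl | hu₁
  · norm_num
    linarith [log_two_lt_d9]
  have hplus := log_one_add_le_pade hu₀
  have hminus := sum_range_pow_div_le_neg_log_one_sub hu₀ hu₁ 4
  norm_num [sum_range_succ] at hminus
  have hpoly : u ^ 2 + u ^ 4 / 2 - ((1 + u) * (u * (6 + u) / (6 + 4 * u))
      - (1 - u) * (u + u ^ 2 / 2 + u ^ 3 / 3 + u ^ 4 / 4))
      = u ^ 4 * (11 + u - 6 * u ^ 2) / (6 * (6 + 4 * u)) := by
    field_simp
    ring
  have hpos : 0 ≤ u ^ 4 * (11 + u - 6 * u ^ 2) / (6 * (6 + 4 * u)) := by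
    have : 0 ≤ 11 + u - 6 * u ^ 2 := by nlinarith
    positivity
  calc (1 + u) * log (1 + u) + (1 - u) * log (1 - u)
      ≤ (1 + u) * (u * (6 + u) / (6 + 4 * u))
        - (1 - u) * (u + u ^ 2 / 2 + u ^ 3 / 3 + u ^ 4 / 4) := by
        have h₁ := mul_le_mul_of_nonneg_left hplus (by linarith : (0 : ℝ) ≤ 1 + u)
        have h₂ := mul_le_mul_of_nonneg_left hminus (by linarith : (0 : ℝ) ≤ 1 - u)
        linarith
    _ ≤ u ^ 2 + u ^ 4 / 2 := by linarith

theorem binEntropy_eq_log_two_sub (x : ℝ) :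
    binEntropy x = log 2 - (x * log (2 * x) + (1 - x) * log (2 * (1 - x))) := by
  have mul_log_two_mul (y : ℝ) : y * log (2 * y) = y * log 2 + y * log y := by
    rcases eq_or_ne y 0 with rfl | hy
    · simp
    · rw [log_mul two_ne_zero hy, mul_add]
  rw [binEntropy, log_inv, log_inv, mul_log_two_mul, mul_log_two_mul]
  ring

end Real

theorem binEntropy_ge (x : ℝ) (h0 : 0 ≤ x) (h1 : x ≤ 1) :
    Real.log 2 - 2 * (1 / 2 - x) ^ 2 - 4 * (1 / 2 - x) ^ 4 ≤ Real.binEntropy x := by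
  wlog hx : x ≤ 1 / 2 generalizing x
  · have := this (1 - x) (by linarith) (by linarith) (by linarith)
    rw [binEntropy_one_sub] at this
    linarith
  have key := one_add_mul_log_one_add_add_one_sub_mul_log_one_sub_le
    (u := 1 - 2 * x) (by linarith) (by linarith)
  rw [show 1 + (1 - 2 * x) = 2 * (1 - x) by ring, show 1 - (1 - 2 * x) = 2 * x by ring] at key
  rw [binEntropy_eq_log_two_sub]
  linarith
end

section
/- A Turán (n,k,r)-system of size at most (C(n,r)/C(k,r))·(1 + log C(n,k)) exists, obtainable by random sampling of r-sets. -/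
/-!
The random-sampling bound is realised greedily. By double counting, every family of `k`-sets has
an `r`-set contained in at least a fraction `p = C(k,r)/C(n,r)` of its members, so `t` greedy
choices leave at most `C(n,k)(1-p)^t ≤ C(n,k)e^{-pt}` of the `k`-sets uncovered. This is `< 1` for
`t = ⌊log C(n,k) / p⌋ + 1 ≤ (1 + log C(n,k)) / p`.
-/

open Finset

section Cover

variable {β γ : Type*} [DecidableEq β] (covers : β → γ → Prop) [∀ b x, Decidable (covers b x)]

theorem exists_cover_card_le_of_mul_one_sub_pow_lt_one (P : β → Prop) {p : ℝ} (hp : p ≤ 1)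
    (t : ℕ) (U : Finset γ)
    (hstep : ∀ V ⊆ U, V.Nonempty → ∃ b, P b ∧ p * #V ≤ #{x ∈ V | covers b x})
    (hU : #U * (1 - p) ^ t < 1) :
    ∃ T : Finset β, (∀ b ∈ T, P b) ∧ (∀ x ∈ U, ∃ b ∈ T, covers b x) ∧ #T ≤ t := by
  induction t generalizing U with
  | zero =>
    have : U = ∅ := by
      rw [pow_zero, mul_one] at hU
      exact card_eq_zero.mp (Nat.lt_one_iff.mp (by exact_mod_cast hU))
    exact ⟨∅, by simp, by simp [this], by simp⟩
  | succ t ih =>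
    obtain rfl | hne := U.eq_empty_or_nonempty
    · exact ⟨∅, by simp, by simp, by simp⟩
    obtain ⟨b, hb, hcovered⟩ := hstep U subset_rfl hne
    set V := {x ∈ U | ¬ covers b x}
    have hV : (#V : ℝ) ≤ (1 - p) * #U := by
      have hsplit : (#{x ∈ U | covers b x} + #V : ℝ) = #U := by
        exact_mod_cast card_filter_add_card_filter_not (covers b)
      linarith
    have hVt : #V * (1 - p) ^ t < 1 := by
      calc #V * (1 - p) ^ t ≤ (1 - p) * #U * (1 - p) ^ t := by gcongr
        _ = #U * (1 - p) ^ (t + 1) := by ring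
        _ < 1 := hU
    obtain ⟨T, hTP, hTV, hTt⟩ :=
      ih V (fun W hW => hstep W (hW.trans (filter_subset _ _))) hVt
    refine ⟨insert b T, ?_, fun x hx => ?_, (card_insert_le _ _).trans (by omega)⟩
    · simpa [hb] using hTP
    · by_cases hbx : covers b x
      · exact ⟨b, mem_insert_self _ _, hbx⟩
      · obtain ⟨c, hc, hcx⟩ := hTV x (mem_filter.mpr ⟨hx, hbx⟩)
        exact ⟨c, mem_insert_of_mem hc, hcx⟩

end Cover

section Subsets

variable {α : Type*} [Fintype α] [DecidableEq α] {k : ℕ}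

theorem sum_card_filter_subset_eq_mul_choose (U : Finset (Finset α)) (hU : ∀ K ∈ U, #K = k)
    (r : ℕ) : ∑ R ∈ powersetCard r (univ : Finset α), #{K ∈ U | R ⊆ K} = #U * k.choose r := by
  calc ∑ R ∈ powersetCard r univ, #{K ∈ U | R ⊆ K}
      = ∑ K ∈ U, #((powersetCard r univ).bipartiteBelow (· ⊆ ·) K) :=
        sum_card_bipartiteAbove_eq_sum_card_bipartiteBelow _
    _ = ∑ K ∈ U, k.choose r := sum_congr rfl fun K hK => by
        have : (powersetCard r univ).bipartiteBelow (· ⊆ ·) K = powersetCard r K := by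
          ext R; simp [bipartiteBelow, mem_powersetCard, and_comm]
        rw [this, card_powersetCard, hU K hK]
    _ = #U * k.choose r := by rw [sum_const, smul_eq_mul]

theorem exists_card_eq_mul_choose_le (U : Finset (Finset α)) (hU : ∀ K ∈ U, #K = k) {r : ℕ}
    (hr : r ≤ Fintype.card α) :
    ∃ R : Finset α, #R = r ∧
      k.choose r * #U ≤ #{K ∈ U | R ⊆ K} * (Fintype.card α).choose r := by
  have hsum : ∑ _R ∈ powersetCard r (univ : Finset α), k.choose r * #U
      = ∑ R ∈ powersetCard r (univ : Finset α), #{K ∈ U | R ⊆ K} * (Fintype.card α).choose r := by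
    rw [sum_const, card_powersetCard, card_univ, smul_eq_mul, ← sum_mul,
      sum_card_filter_subset_eq_mul_choose U hU]
    ring
  obtain ⟨R, hR, hle⟩ := exists_le_of_sum_le (powersetCard_nonempty.mpr (by simpa using hr))
    hsum.le
  exact ⟨R, (mem_powersetCard.mp hR).2, hle⟩

end Subsets

theorem mul_one_sub_pow_floor_log_div_add_one_lt_one {N p : ℝ} (hN : 0 < N) (hp0 : 0 < p)
    (hp1 : p ≤ 1) : N * (1 - p) ^ (⌊Real.log N / p⌋₊ + 1) < 1 := by
  set t := ⌊Real.log N / p⌋₊ + 1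
  have hlog : Real.log N < p * t := by
    rw [← div_lt_iff₀' hp0]; exact_mod_cast Nat.lt_floor_add_one _
  calc N * (1 - p) ^ t ≤ N * Real.exp (-p) ^ t := by
        gcongr
        exact Real.one_sub_le_exp_neg p
    _ = Real.exp (Real.log N - p * t) := by
        rw [Real.exp_sub, Real.exp_log hN, ← Real.exp_nat_mul, mul_neg, Real.exp_neg,
          div_eq_mul_inv, mul_comm p]
    _ < 1 := Real.exp_lt_one_iff.mpr (by linarith)

theorem floor_log_div_add_one_le {N p : ℝ} (hN : 1 ≤ N) (hp0 : 0 < p) (hp1 : p ≤ 1) :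
    ((⌊Real.log N / p⌋₊ + 1 : ℕ) : ℝ) ≤ (1 + Real.log N) / p := by
  have hlog : 0 ≤ Real.log N / p := div_nonneg (Real.log_nonneg hN) hp0.le
  push_cast
  calc (⌊Real.log N / p⌋₊ : ℝ) + 1 ≤ Real.log N / p + 1 / p := by
        gcongr
        · exact Nat.floor_le hlog
        · exact one_le_one_div hp0 hp1
    _ = (1 + Real.log N) / p := by ring

theorem turan_random_sampling_general (n k r : ℕ) (hrk : r ≤ k) (hkn : k ≤ n) :
    ∃ T : Finset (Finset (Fin n)),
      (∀ R ∈ T, R.card = r) ∧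
      (∀ K : Finset (Fin n), K.card = k → ∃ R ∈ T, R ⊆ K) ∧
      (T.card : ℝ) ≤ (n.choose r : ℝ) / (k.choose r : ℝ) * (1 + Real.log (n.choose k)) := by
  have hnr : (0 : ℝ) < n.choose r := by exact_mod_cast Nat.choose_pos (hrk.trans hkn)
  set p : ℝ := k.choose r / n.choose r
  have hp0 : 0 < p := div_pos (by exact_mod_cast Nat.choose_pos hrk) hnr
  have hp1 : p ≤ 1 := div_le_one_of_le₀ (by exact_mod_cast Nat.choose_le_choose r hkn) hnr.le
  have hN : (1 : ℝ) ≤ n.choose k := by exact_mod_cast Nat.choose_pos hkn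
  set U := powersetCard k (univ : Finset (Fin n))
  have hUcard : (#U : ℝ) = n.choose k := by simp [U]
  have hstep (V : Finset (Finset (Fin n))) (hV : V ⊆ U) (_ : V.Nonempty) :
      ∃ R, #R = r ∧ p * #V ≤ #{K ∈ V | R ⊆ K} := by
    obtain ⟨R, hR, hle⟩ := exists_card_eq_mul_choose_le V
      (fun K hK => (mem_powersetCard.mp (hV hK)).2) (r := r) (by simpa using hrk.trans hkn)
    refine ⟨R, hR, ?_⟩
    rw [Fintype.card_fin] at hle
    rw [div_mul_eq_mul_div, div_le_iff₀ hnr]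
    exact_mod_cast hle
  obtain ⟨T, hTr, hTU, hTt⟩ := exists_cover_card_le_of_mul_one_sub_pow_lt_one (· ⊆ ·)
    (fun R => #R = r) hp1 (⌊Real.log (n.choose k) / p⌋₊ + 1) U hstep
    (hUcard ▸ mul_one_sub_pow_floor_log_div_add_one_lt_one (by linarith) hp0 hp1)
  refine ⟨T, hTr, fun K hK => hTU K (by simpa [U]), ?_⟩
  calc (#T : ℝ) ≤ (⌊Real.log (n.choose k) / p⌋₊ + 1 : ℕ) := by exact_mod_cast hTt
    _ ≤ (1 + Real.log (n.choose k)) / p := floor_log_div_add_one_le hN hp0 hp1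
    _ = _ := by rw [div_eq_mul_inv, inv_div, mul_comm]

theorem turan_random_sampling (n k r : ℕ) (hr : 1 ≤ r) (hrk : r ≤ k) (hkn : k ≤ n) :
    ∃ T : Finset (Finset (Fin n)),
      (∀ R ∈ T, R.card = r) ∧
      (∀ K : Finset (Fin n), K.card = k → ∃ R ∈ T, R ⊆ K) ∧
      (T.card : ℝ) ≤ (n.choose r : ℝ) / (k.choose r : ℝ) * (1 + Real.log (n.choose k)) :=
  turan_random_sampling_general n k r hrk hkn
end

section
/- For two points x, y ∈ {0,1}^d at Hamming distance r < d/2, and t = d/2 - s√d/2 with 1 ≤ s ≤ d^{1/4}/2, the number I of points z with dist(z,x) ≤ t and dist(z,y) ≤ t satisfies I·2^{-d} ≤ exp(-s²/(2(1-r/d))). -/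
/-!
Let `g z` count the coordinates where `x` and `y` agree but `z` differs from both. Then
`dist(z, x) + dist(z, y) = r + 2 g z`, so every `z` in both balls has
`g z ≤ (d - r)/2 - s√d/2`. For uniform `z`, `g` is binomial with `d - r` fair trials, and the
exponential-moment bound, with `(1 + e^{-L})/2 = e^{-L/2} cosh(L/2) ≤ e^{-L/2 + L²/8}` and
`L = 4a/m`, gives `P(g ≤ m/2 - a) ≤ exp(-2a²/m)`; take `m = d - r` and `a = s√d/2`.
-/

open Finset Real

theorem card_filter_le_sum_exp {α : Type*} (s : Finset α) (f : α → ℝ) (C : ℝ) {L : ℝ}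
    (hL : 0 ≤ L) : (#{z ∈ s | f z ≤ C} : ℝ) ≤ ∑ z ∈ s, exp (L * (C - f z)) := by
  rw [card_filter, Nat.cast_sum]
  refine sum_le_sum fun z _ => ?_
  split_ifs with hz
  · exact_mod_cast one_le_exp (mul_nonneg hL (sub_nonneg.2 hz))
  · simpa using (exp_pos _).le

theorem one_add_exp_neg_div_two_le (L : ℝ) : (1 + exp (-L)) / 2 ≤ exp (-L / 2 + L ^ 2 / 8) := by
  have hcosh : (1 + exp (-L)) / 2 = exp (-L / 2) * cosh (L / 2) := by
    rw [cosh_eq, mul_div_assoc', mul_add, ← exp_add, ← exp_add, neg_div, neg_add_cancel,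
      exp_zero, ← neg_add, add_halves, add_comm]
  calc (1 + exp (-L)) / 2 = exp (-L / 2) * cosh (L / 2) := hcosh
    _ ≤ exp (-L / 2) * exp ((L / 2) ^ 2 / 2) := by gcongr; exact cosh_le_exp_half_sq _
    _ = exp (-L / 2 + L ^ 2 / 8) := by rw [← exp_add]; ring_nf

section

variable {ι : Type*} [Fintype ι]

theorem hammingDist_add_hammingDist_eq (x y z : ι → Bool) :
    hammingDist z x + hammingDist z y = hammingDist x y + 2 * #{i | x i = y i ∧ z i ≠ x i} := by
  simp only [hammingDist, card_filter, mul_sum, ← sum_add_distrib]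
  refine sum_congr rfl fun i _ => ?_
  cases z i <;> cases x i <;> cases y i <;> rfl

theorem sum_pow_card_filter_ne [DecidableEq ι] {R : Type*} [CommSemiring R] (p : ι → Prop)
    [DecidablePred p] (x : ι → Bool) (q : R) :
    ∑ z : ι → Bool, q ^ #{i | p i ∧ z i ≠ x i}
      = (1 + q) ^ #{i | p i} * 2 ^ #{i | ¬p i} := by
  have hcoord (i : ι) :
      ∑ b : Bool, (if p i ∧ b ≠ x i then q else 1) = if p i then 1 + q else 2 := by
    by_cases hi : p i <;> cases x i <;> simp [hi, add_comm, one_add_one_eq_two]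
  calc ∑ z : ι → Bool, q ^ #{i | p i ∧ z i ≠ x i}
      = ∑ z : ι → Bool, ∏ i, if p i ∧ z i ≠ x i then q else 1 := by
        simp only [← prod_filter, prod_const]
    _ = ∏ i, if p i then 1 + q else 2 := by
        rw [← prod_congr rfl fun i _ => hcoord i, Fintype.prod_sum]
    _ = (1 + q) ^ #{i | p i} * 2 ^ #{i | ¬p i} := by
        rw [prod_ite, prod_const, prod_const]

theorem card_filter_card_ne_le_two_pow_mul_exp [DecidableEq ι] (p : ι → Prop) [DecidablePred p]
    (x : ι → Bool) (a : ℝ) {L : ℝ} (hL : 0 ≤ L) :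
    (#{z : ι → Bool | (#{i | p i ∧ z i ≠ x i} : ℝ) ≤ #{i | p i} / 2 - a} : ℝ)
      ≤ 2 ^ Fintype.card ι * exp (-L * a + #{i | p i} * L ^ 2 / 8) := by
  set m := #{i | p i}
  have hcard : Fintype.card ι = m + #{i | ¬p i} := by
    rw [← card_univ, card_filter_add_card_filter_not]
  calc (#{z : ι → Bool | (#{i | p i ∧ z i ≠ x i} : ℝ) ≤ m / 2 - a} : ℝ)
      ≤ ∑ z : ι → Bool, exp (L * (m / 2 - a - #{i | p i ∧ z i ≠ x i})) :=
        card_filter_le_sum_exp _ _ _ hL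
    _ = exp (L * (m / 2 - a)) * ∑ z : ι → Bool, exp (-L) ^ #{i | p i ∧ z i ≠ x i} := by
        rw [mul_sum]
        refine sum_congr rfl fun z _ => ?_
        rw [← exp_nat_mul, ← exp_add]
        ring_nf
    _ = 2 ^ Fintype.card ι * (exp (L * (m / 2 - a)) * ((1 + exp (-L)) / 2) ^ m) := by
        rw [sum_pow_card_filter_ne, hcard, div_pow, pow_add]
        field_simp
        rfl
    _ ≤ 2 ^ Fintype.card ι * (exp (L * (m / 2 - a)) * exp (-L / 2 + L ^ 2 / 8) ^ m) := by
        gcongr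
        exact one_add_exp_neg_div_two_le L
    _ = 2 ^ Fintype.card ι * exp (-L * a + m * L ^ 2 / 8) := by
        rw [← exp_nat_mul, ← exp_add]
        ring_nf

theorem card_filter_card_ne_le_two_pow_mul_exp_sq [DecidableEq ι] (p : ι → Prop)
    [DecidablePred p] (x : ι → Bool) {a : ℝ} (ha : 0 ≤ a) (hm : 0 < #{i | p i}) :
    (#{z : ι → Bool | (#{i | p i ∧ z i ≠ x i} : ℝ) ≤ #{i | p i} / 2 - a} : ℝ)
      ≤ 2 ^ Fintype.card ι * exp (-2 * a ^ 2 / #{i | p i}) := by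
  have hm' : (0 : ℝ) < #{i | p i} := by exact_mod_cast hm
  convert card_filter_card_ne_le_two_pow_mul_exp p x a (L := 4 * a / #{i | p i}) (by positivity)
    using 3
  field_simp
  ring

end

theorem hamming_ball_intersection_upper_general (d r : ℕ)
    (x y : Fin d → Bool) (hxy : hammingDist x y = r) (hr : (r : ℝ) < (d : ℝ) / 2)
    (s : ℝ) (hs1 : 1 ≤ s) :
    ((Finset.univ.filter
        (fun z : Fin d → Bool =>
          (hammingDist z x : ℝ) ≤ (d : ℝ) / 2 - s * Real.sqrt d / 2 ∧
          (hammingDist z y : ℝ) ≤ (d : ℝ) / 2 - s * Real.sqrt d / 2)).card : ℝ)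
        * 2 ^ (-(d : ℝ))
      ≤ Real.exp (-s ^ 2 / (2 * (1 - (r : ℝ) / d))) := by
  have hd : (0 : ℝ) < d := by linarith [r.cast_nonneg (α := ℝ)]
  have hagree : (#{i | x i = y i} : ℝ) = d - r := by
    have hsplit : #{i | x i = y i} + r = d :=
      hxy ▸ (card_filter_add_card_filter_not _).trans (card_fin d)
    rw [eq_sub_iff_add_eq]
    exact_mod_cast hsplit
  have hagree_pos : 0 < #{i | x i = y i} := by
    exact_mod_cast (show (0 : ℝ) < #{i | x i = y i} by rw [hagree]; linarith)
  have hball (z : Fin d → Bool) (hz : (hammingDist z x : ℝ) ≤ d / 2 - s * √d / 2 ∧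
      (hammingDist z y : ℝ) ≤ d / 2 - s * √d / 2) :
      (#{i | x i = y i ∧ z i ≠ x i} : ℝ) ≤ #{i | x i = y i} / 2 - s * √d / 2 := by
    have hsum : (hammingDist z x + hammingDist z y : ℝ)
        = r + 2 * #{i | x i = y i ∧ z i ≠ x i} := by
      exact_mod_cast hxy ▸ hammingDist_add_hammingDist_eq x y z
    linarith [hz.1, hz.2]
  calc _ ≤ (#{z : Fin d → Bool | (#{i | x i = y i ∧ z i ≠ x i} : ℝ)
          ≤ #{i | x i = y i} / 2 - s * √d / 2} : ℝ) * 2 ^ (-(d : ℝ)) := by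
        gcongr
        exact hball _
    _ ≤ 2 ^ d * exp (-2 * (s * √d / 2) ^ 2 / #{i | x i = y i}) * 2 ^ (-(d : ℝ)) := by
        gcongr
        simpa using card_filter_card_ne_le_two_pow_mul_exp_sq (fun i => x i = y i) x
          (by positivity) hagree_pos
    _ = exp (-s ^ 2 / (2 * (1 - r / d))) := by
        rw [hagree, rpow_neg zero_le_two, rpow_natCast, mul_comm, ← mul_assoc,
          inv_mul_cancel₀ (by positivity), one_mul, div_pow, mul_pow, sq_sqrt hd.le]
        congr 1
        field_simp

theorem hamming_ball_intersection_upper (d r : ℕ) (hd : 0 < d)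
    (x y : Fin d → Bool) (hxy : hammingDist x y = r) (hr : (r : ℝ) < (d : ℝ) / 2)
    (s : ℝ) (hs1 : 1 ≤ s) (hs2 : s ≤ (d : ℝ) ^ ((1 : ℝ) / 4) / 2) :
    ((Finset.univ.filter
        (fun z : Fin d → Bool =>
          (hammingDist z x : ℝ) ≤ (d : ℝ) / 2 - s * Real.sqrt d / 2 ∧
          (hammingDist z y : ℝ) ≤ (d : ℝ) / 2 - s * Real.sqrt d / 2)).card : ℝ)
        * 2 ^ (-(d : ℝ))
      ≤ Real.exp (-s ^ 2 / (2 * (1 - (r : ℝ) / d))) :=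
  hamming_ball_intersection_upper_general d r x y hxy hr s hs1
end
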